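/- arXiv:2605.04795 — 2 statements merged into one kernel-verified Lean document; each statement's English description precedes it below -/
import Mathlib

section
/- Let \u0393 be a finite graph (possibly with parallel edges and loops) with an orientation O. The following are equivalent: (1) for every cycle \u03b3 in \u0393, the number of edges that \u03b3 traverses in the direction of O equals the number of edges that \u03b3 traverses against the direction of O; (2) there exists a finite sequence of orientations O = O_0, O_1, ..., O_k = O^rev (the reversal of O) such that each O_i arises from O_{i-1} by pushing up a sink. -/
/-!
Finite multigraphs (parallel edges and loops allowed).

An edge is recorded with an (auxiliary) ordered pair of endpoints; the graph is
regarded as unoriented, and a *dart* is an edge together with a direction of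
traversal.  A *cycle* is a closed edge-path.  An *orientation* chooses a
direction for every edge.
-/

structure FinMultigraph where
  V : Type
  E : Type
  fintypeV : Fintype V
  fintypeE : Fintype E
  ends : E → V × V

namespace FinMultigraph

variable (G : FinMultigraph)

/-- A dart: an edge with a direction of traversal (`true` = from `(ends e).1` to
`(ends e).2`, `false` = the other way). -/
abbrev Dart (G : FinMultigraph) : Type := G.E × Bool

/-- Starting vertex of a dart. -/
def dartSrc (d : G.Dart) : G.V := if d.2 then (G.ends d.1).1 else (G.ends d.1).2

/-- Ending vertex of a dart. -/
def dartDst (d : G.Dart) : G.V := if d.2 then (G.ends d.1).2 else (G.ends d.1).1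

/-- `G.IsWalk u v l` : the list of darts `l` forms an edge-path from `u` to `v`. -/
def IsWalk : G.V → G.V → List G.Dart → Prop
  | u, v, [] => u = v
  | u, v, d :: l => G.dartSrc d = u ∧ IsWalk (G.dartDst d) v l

/-- A cycle: a closed edge-path (at some vertex).  Its length is the number of
edges traversed (with multiplicity). -/
def IsCycle (l : List G.Dart) : Prop := ∃ v, G.IsWalk v v l

/-- A graph is bipartite if the vertices split into two classes `L` and `Lᶜ`
such that every edge joins a vertex of `L` to a vertex of `Lᶜ`. -/
def Bipartite : Prop :=
  ∃ L : Set G.V, ∀ e : G.E, ((G.ends e).1 ∈ L ↔ (G.ends e).2 ∉ L)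

/-- An orientation of `G`: a direction for every edge. -/
abbrev Orientation (G : FinMultigraph) : Type := G.E → Bool

/-- The reversed orientation `O^rev`. -/
def reverse (O : G.Orientation) : G.Orientation := fun e => !(O e)

/-- Tail (starting vertex) of an edge under an orientation. -/
def oSrc (O : G.Orientation) (e : G.E) : G.V := G.dartSrc (e, O e)

/-- Head (ending vertex) of an edge under an orientation. -/
def oDst (O : G.Orientation) (e : G.E) : G.V := G.dartDst (e, O e)

/-- Incidence of a vertex and an edge. -/
def Incident (v : G.V) (e : G.E) : Prop := (G.ends e).1 = v ∨ (G.ends e).2 = v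

/-- A sink of an orientation: a vertex all of whose incident edges point into it
(in particular no loop is attached to it). -/
def IsSink (O : G.Orientation) (v : G.V) : Prop :=
  ∀ e, G.Incident v e → (G.oDst O e = v ∧ G.oSrc O e ≠ v)

/-- `O'` arises from `O` by pushing up a sink: `O` and `O'` differ precisely on
the edges surrounding some sink of `O`. -/
def PushUpSink (O O' : G.Orientation) : Prop :=
  ∃ v, G.IsSink O v ∧ ∀ e, (O' e ≠ O e ↔ G.Incident v e)

/-- The number of edges a walk `l` traverses in the direction of `O`. -/
def forwardCount (O : G.Orientation) (l : List G.Dart) : ℕ :=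
  (l.filter fun d => d.2 == O d.1).length

/-- The number of edges a walk `l` traverses against the direction of `O`. -/
def backwardCount (O : G.Orientation) (l : List G.Dart) : ℕ :=
  (l.filter fun d => d.2 != O d.1).length

/-- Connectedness of a multigraph: any two vertices are joined by a walk. -/
def Connected : Prop := ∀ u v : G.V, ∃ l, G.IsWalk u v l

/-- A height map for an orientation: drops by `1` along every oriented edge. -/
def IsHeightMap (O : G.Orientation) (h : G.V → ℤ) : Prop :=
  ∀ e : G.E, h (G.oDst O e) = h (G.oSrc O e) - 1

end FinMultigraph

/-!
Call the weight of a walk the number of its edges traversed against `O` minus the number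
traversed along `O`. Pushing up a sink `v` changes the weight of every dart by the coboundary of
`2·[v]`, so it preserves the weight of every cycle, whereas reversing `O` negates it; so if `O^rev`
is reached from `O`, all cycle weights vanish. Conversely, if they do, `O` has a height function
`h` that drops by `1` along every edge, and `2C - h` is one for `O^rev` when `C ≥ max h`.
Pushing up a lowest vertex among those whose height is still below its target raises that height
by `2`, and the process ends exactly at `O^rev`.
-/

theorem Relation.reflTransGen_iff_exists_seq {α : Type*} {r : α → α → Prop} {a b : α} :
    Relation.ReflTransGen r a b ↔
      ∃ (k : ℕ) (f : ℕ → α), f 0 = a ∧ f k = b ∧ ∀ i < k, r (f i) (f (i + 1)) := by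
  constructor
  · intro h
    induction h using Relation.ReflTransGen.head_induction_on with
    | refl => exact ⟨0, fun _ => b, rfl, rfl, by simp⟩
    | head hac _ ih =>
      obtain ⟨k, f, hf0, hfk, hf⟩ := ih
      refine ⟨k + 1, fun i => if i = 0 then _ else f (i - 1), rfl, by simpa using hfk, ?_⟩
      rintro (_ | i) hi
      · simpa [hf0] using hac
      · simpa using hf i (by omega)
  · rintro ⟨k, f, rfl, rfl, hf⟩
    exact (reflTransGen_of_succ_of_le (fun i j => r (f i) (f j))
      (fun i hi => by simpa using hf i hi.2) k.zero_le).lift f fun _ _ => id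

namespace FinMultigraph

variable {G : FinMultigraph}

instance instFintypeV : Fintype G.V := G.fintypeV

def dartRev (d : G.Dart) : G.Dart := (d.1, !d.2)

@[simp] lemma dartSrc_dartRev (d : G.Dart) : G.dartSrc (dartRev d) = G.dartDst d := by
  cases d with | mk e b => cases b <;> rfl

@[simp] lemma dartDst_dartRev (d : G.Dart) : G.dartDst (dartRev d) = G.dartSrc d := by
  cases d with | mk e b => cases b <;> rfl

lemma incident_iff_dartSrc_or_dartDst {v : G.V} (d : G.Dart) :
    G.Incident v d.1 ↔ G.dartSrc d = v ∨ G.dartDst d = v := by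
  cases d with | mk e b => cases b <;> simp [Incident, dartSrc, dartDst, or_comm]

@[simp] lemma oSrc_reverse (O : G.Orientation) (e : G.E) :
    G.oSrc (G.reverse O) e = G.oDst O e :=
  dartSrc_dartRev (e, O e)

@[simp] lemma oDst_reverse (O : G.Orientation) (e : G.E) :
    G.oDst (G.reverse O) e = G.oSrc O e :=
  dartDst_dartRev (e, O e)

lemma oSrc_eq_oDst_of_ne {O O' : G.Orientation} {e : G.E} (h : O' e ≠ O e) :
    G.oSrc O' e = G.oDst O e := by
  rw [oSrc, Bool.eq_not_of_ne h]; exact dartSrc_dartRev (e, O e)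

lemma oDst_eq_oSrc_of_ne {O O' : G.Orientation} {e : G.E} (h : O' e ≠ O e) :
    G.oDst O' e = G.oSrc O e := by
  rw [oDst, Bool.eq_not_of_ne h]; exact dartDst_dartRev (e, O e)

namespace IsWalk

lemma append {u v w : G.V} {l m : List G.Dart} (hl : G.IsWalk u v l) (hm : G.IsWalk v w m) :
    G.IsWalk u w (l ++ m) := by
  induction l generalizing u with
  | nil => exact (hl : u = v) ▸ hm
  | cons d l ih => exact ⟨hl.1, ih hl.2⟩

lemma reverse {u v : G.V} {l : List G.Dart} (hl : G.IsWalk u v l) :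
    G.IsWalk v u (l.reverse.map dartRev) := by
  induction l generalizing u with
  | nil => exact (hl : u = v).symm
  | cons d l ih =>
    have hd : G.IsWalk (G.dartDst d) u [dartRev d] := ⟨by simp, by simp [IsWalk, hl.1]⟩
    simpa using (ih hl.2).append hd

lemma sum_map_eq_sub {u w : G.V} {l : List G.Dart} (hl : G.IsWalk u w l) {f : G.V → ℤ}
    {g : G.Dart → ℤ} (hg : ∀ d, g d = f (G.dartDst d) - f (G.dartSrc d)) :
    (l.map g).sum = f w - f u := by
  induction l generalizing u with
  | nil => obtain rfl : u = w := hl; simp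
  | cons d l ih => rw [List.map_cons, List.sum_cons, ih hl.2, hg, hl.1]; ring

end IsWalk

def dartWeight (O : G.Orientation) (d : G.Dart) : ℤ := if d.2 = O d.1 then -1 else 1

def weight (O : G.Orientation) (l : List G.Dart) : ℤ := (l.map (dartWeight O)).sum

lemma weight_eq_backwardCount_sub_forwardCount (O : G.Orientation) (l : List G.Dart) :
    weight O l = G.backwardCount O l - G.forwardCount O l := by
  induction l with
  | nil => simp [weight, backwardCount, forwardCount]
  | cons d l ih =>
    simp only [weight, backwardCount, forwardCount, List.map_cons, List.sum_cons,
      List.filter_cons] at *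
    by_cases h : d.2 = O d.1 <;> simp [dartWeight, h, ih] <;> ring

lemma forwardCount_eq_backwardCount_iff (O : G.Orientation) (l : List G.Dart) :
    G.forwardCount O l = G.backwardCount O l ↔ weight O l = 0 := by
  rw [weight_eq_backwardCount_sub_forwardCount]; omega

lemma weight_append (O : G.Orientation) (l m : List G.Dart) :
    weight O (l ++ m) = weight O l + weight O m := by
  simp [weight]

lemma weight_reverse_map_dartRev (O : G.Orientation) (l : List G.Dart) :
    weight O (l.reverse.map dartRev) = -weight O l := by
  have h : ∀ d, dartWeight O (dartRev d) = -dartWeight O d := by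
    rintro ⟨e, b⟩; cases b <;> cases h : O e <;> simp [dartWeight, dartRev, h]
  simp [weight, Function.comp_def, h, List.sum_neg]

lemma weight_reverse (O : G.Orientation) (l : List G.Dart) :
    weight (G.reverse O) l = -weight O l := by
  have h : ∀ d, dartWeight (G.reverse O) d = -dartWeight O d := by
    rintro ⟨e, b⟩; cases b <;> cases h : O e <;> simp [dartWeight, reverse, h]
  simp [weight, funext h, List.sum_neg, Function.comp_def]

lemma PushUpSink.weight_eq {O O' : G.Orientation} (hp : G.PushUpSink O O') {l : List G.Dart}
    (hl : G.IsCycle l) : weight O' l = weight O l := by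
  classical
  obtain ⟨v, hv, hO'⟩ := hp
  obtain ⟨u, hl⟩ := hl
  let f : G.V → ℤ := fun x => if x = v then 2 else 0
  have hdart : ∀ d, dartWeight O' d = dartWeight O d + (f (G.dartDst d) - f (G.dartSrc d)) := by
    rintro ⟨e, b⟩
    by_cases he : G.Incident v e
    · obtain ⟨hdst, hsrc⟩ := hv e he
      have hO'e : O' e = !O e := Bool.eq_not_of_ne ((hO' e).2 he)
      cases b <;> cases h : O e <;> simp_all [f, dartWeight, oSrc, oDst, dartSrc, dartDst]
    · have hO'e : O' e = O e := not_not.1 (mt (hO' e).1 he)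
      rw [incident_iff_dartSrc_or_dartDst (e, b), not_or] at he
      simp [f, dartWeight, hO'e, he.1, he.2]
  rw [weight, weight, funext hdart, List.sum_map_add, hl.sum_map_eq_sub fun _ => rfl, sub_self,
    add_zero]

lemma weight_eq_of_reflTransGen {O O' : G.Orientation}
    (hp : Relation.ReflTransGen G.PushUpSink O O') {l : List G.Dart} (hl : G.IsCycle l) :
    weight O' l = weight O l := by
  induction hp with
  | refl => rfl
  | tail _ hp ih => exact (hp.weight_eq hl).trans ih

lemma weight_eq_of_isWalk {O : G.Orientation} (hO : ∀ l, G.IsCycle l → weight O l = 0)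
    {u v : G.V} {p q : List G.Dart} (hp : G.IsWalk u v p) (hq : G.IsWalk u v q) :
    weight O p = weight O q := by
  have := hO _ ⟨u, hp.append hq.reverse⟩
  rw [weight_append, weight_reverse_map_dartRev] at this
  omega

variable (G) in
def walkSetoid : Setoid G.V where
  r u v := ∃ l, G.IsWalk u v l
  iseqv :=
    ⟨fun _ => ⟨[], rfl⟩, fun ⟨_, hl⟩ => ⟨_, hl.reverse⟩, fun ⟨_, hl⟩ ⟨_, hm⟩ => ⟨_, hl.append hm⟩⟩

/-- Heights are weights of walks from a fixed base point of each connected component. -/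
lemma exists_isHeightMap {O : G.Orientation} (hO : ∀ l, G.IsCycle l → weight O l = 0) :
    ∃ h, G.IsHeightMap O h := by
  choose p hp using fun v => (Quotient.mk_out v : walkSetoid G ⟦v⟧.out v)
  refine ⟨fun v => weight O (p v), fun e => ?_⟩
  have hedge : G.IsWalk (G.oSrc O e) (G.oDst O e) [(e, O e)] := ⟨rfl, rfl⟩
  have hwalk := (hp (G.oSrc O e)).append hedge
  rw [Quotient.sound (s := walkSetoid G) ⟨_, hedge⟩] at hwalk
  change weight O _ = weight O _ - 1
  rw [weight_eq_of_isWalk hO (hp _) hwalk, weight_append, sub_eq_add_neg]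
  simp [weight, dartWeight]

namespace IsHeightMap

variable {O : G.Orientation} {h : G.V → ℤ}

lemma reverse (hh : G.IsHeightMap O h) (c : ℤ) :
    G.IsHeightMap (G.reverse O) fun x => c - h x := by
  intro e
  simp only [oSrc_reverse, oDst_reverse, hh e]
  ring

lemma abs_sub_eq_one (hh : G.IsHeightMap O h) (O' : G.Orientation) (e : G.E) :
    |h (G.oSrc O' e) - h (G.oDst O' e)| = 1 := by
  by_cases he : O' e = O e
  · have := hh e
    simp only [oSrc, oDst, he] at this ⊢
    simp [this]
  · simp [oSrc_eq_oDst_of_ne he, oDst_eq_oSrc_of_ne he, hh e]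

lemma orientation_eq {T : G.Orientation} (hO : G.IsHeightMap O h) (hT : G.IsHeightMap T h) :
    O = T := by
  funext e
  by_contra he
  have := hT e
  rw [oSrc_eq_oDst_of_ne (Ne.symm he), oDst_eq_oSrc_of_ne (Ne.symm he), hO e] at this
  omega

end IsHeightMap

open Classical in
noncomputable def pushUp (O : G.Orientation) (v : G.V) : G.Orientation :=
  fun e => if G.Incident v e then !O e else O e

lemma pushUpSink_pushUp {O : G.Orientation} {v : G.V} (hv : G.IsSink O v) :
    G.PushUpSink O (pushUp O v) :=
  ⟨v, hv, fun e => by by_cases he : G.Incident v e <;> simp [pushUp, he]⟩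

open Classical in
lemma IsHeightMap.pushUp {O : G.Orientation} {h : G.V → ℤ} (hh : G.IsHeightMap O h) {v : G.V}
    (hv : G.IsSink O v) : G.IsHeightMap (pushUp O v) (Function.update h v (h v + 2)) := by
  intro e
  by_cases he : G.Incident v e
  · have hne : FinMultigraph.pushUp O v e ≠ O e := by simp [FinMultigraph.pushUp, he]
    obtain ⟨hdst, hsrc⟩ := hv e he
    have := hh e
    rw [hdst] at this
    rw [oSrc_eq_oDst_of_ne hne, oDst_eq_oSrc_of_ne hne, hdst, Function.update_self,
      Function.update_of_ne hsrc, this]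
    ring
  · have heq : FinMultigraph.pushUp O v e = O e := by simp [FinMultigraph.pushUp, he]
    rw [incident_iff_dartSrc_or_dartDst (e, O e), not_or] at he
    simp only [oSrc, oDst, heq, Function.update_of_ne he.1, Function.update_of_ne he.2]
    exact hh e

/-- An edge leaving `v` would end at a vertex `w` with `h w = h v - 1`, hence `r w = 0` by
minimality, and then the heights of its two ends under `T` would differ by at least `3`. -/
lemma isSink_of_isHeightMap {O T : G.Orientation} {h : G.V → ℤ} {r : G.V → ℕ}
    (hO : G.IsHeightMap O h) (hT : G.IsHeightMap T fun x => h x + 2 * r x) {v : G.V}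
    (hv : r v ≠ 0) (hmin : ∀ w, r w ≠ 0 → h v ≤ h w) : G.IsSink O v := by
  intro e he
  have hsrc : G.oSrc O e ≠ v := by
    intro hs
    have hdst := hO e
    rw [hs] at hdst
    have hw : r (G.oDst O e) = 0 := by
      by_contra hw
      linarith [hmin _ hw]
    have := hT.abs_sub_eq_one O e
    rw [hs, hw, hdst, abs_eq zero_le_one] at this
    omega
  exact ⟨((incident_iff_dartSrc_or_dartDst (e, O e)).1 he).resolve_left hsrc, hsrc⟩

theorem reflTransGen_pushUpSink_of_isHeightMap {O T : G.Orientation} {h : G.V → ℤ}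
    {r : G.V → ℕ} (hO : G.IsHeightMap O h) (hT : G.IsHeightMap T fun x => h x + 2 * r x) :
    Relation.ReflTransGen G.PushUpSink O T := by
  classical
  obtain ⟨n, hn⟩ : ∃ n, ∑ x, r x = n := ⟨_, rfl⟩
  induction n generalizing O h r with
  | zero =>
    have hr : ∀ x, r x = 0 := fun x => Finset.sum_eq_zero_iff.1 hn x (Finset.mem_univ x)
    simp only [hr, CharP.cast_eq_zero, mul_zero, add_zero] at hT
    exact hO.orientation_eq hT ▸ .refl
  | succ n ih =>
    obtain ⟨v, hv, hmin⟩ := Finset.exists_min_image {x | r x ≠ 0} h <| by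
      obtain ⟨x, -, hx⟩ := Finset.exists_ne_zero_of_sum_ne_zero (hn.trans_ne n.succ_ne_zero)
      exact ⟨x, by simpa using hx⟩
    simp only [Finset.mem_filter, Finset.mem_univ, true_and] at hv hmin
    have hsink := isSink_of_isHeightMap hO hT hv hmin
    refine .head (pushUpSink_pushUp hsink)
      (ih (hO.pushUp hsink) (r := Function.update r v (r v - 1)) ?_ ?_)
    · convert hT using 2 with x
      by_cases hx : x = v
      · subst hx; simp; omega
      · simp [hx]
    · rw [Finset.sum_update_of_mem (Finset.mem_univ v)]
      rw [Finset.sum_eq_add_sum_sdiff_singleton_of_mem (Finset.mem_univ v)] at hn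
      omega

end FinMultigraph

/-- Pretzel. For an orientation `O` of a finite graph `Γ` the
following are equivalent: (1) every cycle traverses as many edges in the
direction of `O` as against it; (2) there is a finite sequence of orientations
`O = O_0, O_1, …, O_k = O^rev` in which each `O_i` arises from `O_{i-1}` by
pushing up a sink. -/
theorem reversal_by_pushing_up_sinks (G : FinMultigraph) (O : G.Orientation) :
    (∀ l : List G.Dart, G.IsCycle l → G.forwardCount O l = G.backwardCount O l) ↔
      (∃ (k : ℕ) (Os : ℕ → G.Orientation), Os 0 = O ∧ Os k = G.reverse O ∧
        ∀ i < k, G.PushUpSink (Os i) (Os (i + 1))) := by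
  simp only [FinMultigraph.forwardCount_eq_backwardCount_iff,
    ← Relation.reflTransGen_iff_exists_seq]
  constructor
  · intro hO
    obtain ⟨h, hh⟩ := FinMultigraph.exists_isHeightMap hO
    obtain ⟨C, hC⟩ := (Set.finite_range h).bddAbove
    refine FinMultigraph.reflTransGen_pushUpSink_of_isHeightMap hh
      (r := fun x => (C - h x).toNat) ?_
    convert hh.reverse (2 * C) using 2 with x
    have := hC (Set.mem_range_self x)
    omega
  · intro hrev l hl
    have := FinMultigraph.weight_eq_of_reflTransGen hrev hl
    rw [FinMultigraph.weight_reverse] at this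
    omega
end

section
/- Let \u0393 be a finite graph with an orientation O, let s be a sink of O, and let O' be the orientation obtained from O by pushing up the sink s. Then for every cycle \u03b3 in \u0393, the difference between the number of edges \u03b3 traverses in the direction of the orientation and the number of edges \u03b3 traverses against it is the same for O and for O'. -/
/-!
Pushing up the sink `s` flips exactly the edges at `s`, all of which point into `s`. Hence on
every dart the sign `±1` drops by `φ (head) - φ (tail)`, where `φ` is `2` at `s` and `0`
elsewhere, and along a closed walk these drops telescope to `0`.
-/

namespace FinMultigraph

variable {G : FinMultigraph}

def dartSign (O : G.Orientation) (d : G.Dart) : ℤ := if d.2 = O d.1 then 1 else -1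

def balance (O : G.Orientation) (l : List G.Dart) : ℤ := (l.map (dartSign O)).sum

theorem forwardCount_sub_backwardCount (O : G.Orientation) (l : List G.Dart) :
    (G.forwardCount O l : ℤ) - G.backwardCount O l = balance O l := by
  induction l with
  | nil => simp [forwardCount, backwardCount, balance]
  | cons d l ih =>
    simp only [forwardCount, backwardCount, balance] at ih ⊢
    by_cases h : d.2 = O d.1 <;> simp [dartSign, h] <;> omega

theorem IsWalk.balance_sub_eq {O O' : G.Orientation} (φ : G.V → ℤ)
    (hφ : ∀ d, dartSign O d - dartSign O' d = φ (G.dartDst d) - φ (G.dartSrc d)) :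
    ∀ {u v : G.V} {l : List G.Dart}, G.IsWalk u v l → balance O l - balance O' l = φ v - φ u
  | _, _, [], rfl => by simp [balance]
  | _, _, d :: l, ⟨rfl, hl⟩ => by
    have ih := hl.balance_sub_eq φ hφ
    simp only [balance, List.map_cons, List.sum_cons] at ih ⊢
    linarith [hφ d]

theorem dartSign_sub_of_isSink [DecidableEq G.V] {O O' : G.Orientation} {s : G.V}
    (hs : G.IsSink O s) (hdiff : ∀ e, (O' e ≠ O e ↔ G.Incident s e)) (d : G.Dart) :
    dartSign O d - dartSign O' d =
      (if G.dartDst d = s then 2 else 0) - (if G.dartSrc d = s then 2 else 0) := by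
  obtain ⟨e, b⟩ := d
  by_cases hinc : G.Incident s e
  · have hflip : O' e = !O e := Bool.eq_not.2 ((hdiff e).2 hinc)
    obtain ⟨hdst, hsrc⟩ := hs e hinc
    cases b <;> cases hO : O e <;> simp_all [dartSign, oSrc, oDst, dartSrc, dartDst]
  · have hsame : O' e = O e := not_not.1 (mt (hdiff e).1 hinc)
    simp only [Incident, not_or] at hinc
    cases b <;> simp_all [dartSign, dartSrc, dartDst]

end FinMultigraph

/-- Pushing up a sink does not change, for any cycle, the
difference between the number of edges traversed in the direction of the
orientation and the number traversed against it. -/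
theorem pushUpSink_preserves_cycle_balance (G : FinMultigraph)
    (O O' : G.Orientation) (s : G.V) (hs : G.IsSink O s)
    (hdiff : ∀ e, (O' e ≠ O e ↔ G.Incident s e)) :
    ∀ l : List G.Dart, G.IsCycle l →
      (G.forwardCount O l : ℤ) - G.backwardCount O l =
        (G.forwardCount O' l : ℤ) - G.backwardCount O' l := by
  classical
  rintro l ⟨v, hcycle⟩
  have hbalance := hcycle.balance_sub_eq (fun v => if v = s then 2 else 0)
    (G.dartSign_sub_of_isSink hs hdiff)
  rw [G.forwardCount_sub_backwardCount, G.forwardCount_sub_backwardCount]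
  linarith
end
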